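/- arXiv:1409.2162 — 2 statements merged into one kernel-verified Lean document; each statement's English description precedes it below -/
import Mathlib

section
/- For p ≥ 2, δ_i ≥ 0, and the function g_i(t) = (1/p)((|t| - δ_i)_+)^p, if t_1, t_2 ∈ ℝ satisfy |t_1 - t_2| > 2δ_i, then for every s ∈ (0,1) the strict convexity inequality g_i((1-s)t_1 + s t_2) < (1-s)g_i(t_1) + s g_i(t_2) holds. -/
theorem stmt_0 (p δ : ℝ) (hp : 2 ≤ p) (hδ : 0 ≤ δ)
    (g : ℝ → ℝ) (hg : ∀ t, g t = (1 / p) * (max (|t| - δ) 0) ^ p)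
    (t₁ t₂ : ℝ) (ht : |t₁ - t₂| > 2 * δ) :
    ∀ s ∈ Set.Ioo (0 : ℝ) 1,
      g ((1 - s) * t₁ + s * t₂) < (1 - s) * g t₁ + s * g t₂ := by
  rintro s ⟨hs0, hs1⟩
  have hp0 : (0:ℝ) < p := by linarith
  have hp1 : (1:ℝ) < p := by linarith
  have hip : (0:ℝ) < 1 / p := by positivity
  set a := max (|t₁| - δ) 0 with ha
  set b := max (|t₂| - δ) 0 with hb
  set m := (1 - s) * t₁ + s * t₂ with hm
  set dm := max (|m| - δ) 0 with hdm
  have ha0 : 0 ≤ a := le_max_right _ _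
  have hb0 : 0 ≤ b := le_max_right _ _
  have hdm0 : 0 ≤ dm := le_max_right _ _
  have hs1' : 0 < 1 - s := by linarith
  -- convexity of d
  have habs : |m| ≤ (1 - s) * |t₁| + s * |t₂| := by
    calc |m| ≤ |(1 - s) * t₁| + |s * t₂| := abs_add_le _ _
    _ = (1 - s) * |t₁| + s * |t₂| := by
        rw [abs_mul, abs_mul, abs_of_pos hs1', abs_of_pos hs0]
  have hconv : dm ≤ (1 - s) * a + s * b := by
    apply max_le
    · have h1 : |t₁| - δ ≤ a := le_max_left _ _
      have h2 : |t₂| - δ ≤ b := le_max_left _ _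
      nlinarith
    · positivity
  rw [hg, hg, hg]
  by_cases hab : a = b
  · -- then t₁ = -t₂, |m| < |t₁|, dm < a
    have hcpos : 0 < a := by
      rcases lt_or_ge 0 a with h | h
      · exact h
      · exfalso
        have haz : a = 0 := le_antisymm h ha0
        have hbz : b = 0 := hab ▸ haz
        have ha'' : |t₁| - δ ≤ a := le_max_left _ _
        have hb'' : |t₂| - δ ≤ b := le_max_left _ _
        have habs2 : |t₁ - t₂| ≤ |t₁| + |t₂| := abs_sub _ _
        rw [haz] at ha''
        rw [hbz] at hb''
        linarith
    have ht1 : |t₁| = a + δ := by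
      have : |t₁| - δ ≤ a := le_max_left _ _
      rcases max_cases (|t₁| - δ) 0 with ⟨h1, h2⟩ | ⟨h1, h2⟩
      · rw [ha]; linarith [ha ▸ h1]
      · exfalso; rw [ha] at hcpos; linarith
    have ht2 : |t₂| = a + δ := by
      have : |t₂| - δ ≤ b := le_max_left _ _
      rcases max_cases (|t₂| - δ) 0 with ⟨h1, h2⟩ | ⟨h1, h2⟩
      · rw [hab, hb]; linarith [hb ▸ h1]
      · exfalso; rw [hab, hb] at hcpos; linarith
    have hne : t₁ ≠ t₂ := by
      intro h; rw [h, sub_self, abs_zero] at ht; linarith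
    have hneg : t₁ = -t₂ := by
      rcases abs_eq_abs.mp (ht1.trans ht2.symm) with h | h
      · exact absurd h hne
      · exact h
    have hmlt : |m| < a + δ := by
      rw [hm, hneg]
      have : (1 - s) * -t₂ + s * t₂ = (2*s - 1) * t₂ := by ring
      rw [this, abs_mul]
      have ht2pos : 0 < |t₂| := by rw [ht2]; linarith
      have : |2*s - 1| < 1 := by
        rw [abs_lt]; constructor <;> linarith
      calc |2*s-1| * |t₂| < 1 * |t₂| := by
            exact mul_lt_mul_of_pos_right this ht2pos
        _ = a + δ := by rw [one_mul, ht2]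
    have hdmlt : dm < a := by
      apply max_lt (by linarith) hcpos
    have hpow : dm ^ p < a ^ p := Real.rpow_lt_rpow hdm0 hdmlt hp0
    have : (1 - s) * (1 / p * a ^ p) + s * (1 / p * b ^ p) = 1 / p * a ^ p := by
      rw [← hab]; ring
    rw [this]
    exact mul_lt_mul_of_pos_left hpow hip
  · -- strict convexity of x ^ p
    have hsc := strictConvexOn_rpow hp1
    have hkey := hsc.2 (Set.mem_Ici.mpr ha0) (Set.mem_Ici.mpr hb0) hab hs1' hs0 (by ring)
    simp only [smul_eq_mul] at hkey
    have h1 : dm ^ p ≤ ((1 - s) * a + s * b) ^ p :=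
      Real.rpow_le_rpow hdm0 hconv hp0.le
    have h2 : dm ^ p < (1 - s) * a ^ p + s * b ^ p := lt_of_le_of_lt h1 hkey
    calc 1 / p * dm ^ p < 1 / p * ((1 - s) * a ^ p + s * b ^ p) :=
          mul_lt_mul_of_pos_left h2 hip
      _ = (1 - s) * (1 / p * a ^ p) + s * (1 / p * b ^ p) := by ring
end

section
/- Anisotropic Sobolev–Troisi inequality in dimension 2: let 1 < q < 2 and let u be a smooth compactly supported function on ℝ². Then T_q·(∫_{ℝ²} |u|^{4q/(2-q)} dx)^{(2-q)/(2q)} ≤ (∫_{ℝ²} |∂_{x₁} u|² dx)^{1/2} · (∫_{ℝ²} |∂_{x₂} u|^q dx)^{1/q}, where T_q = (2-q)²/(4q² - (2-q)²). -/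
open MeasureTheory Real


lemma ftc_rpow_bound {p : ℝ} (hp : 1 < p) {f f' : ℝ → ℝ}
    (hf : ∀ t, HasDerivAt f (f' t) t) (hf'c : Continuous f')
    (h2f : HasCompactSupport f) (b : ℝ) :
    |f b| ^ p ≤ p * ∫ t, |f t| ^ (p - 1) * |f' t| := by
  have hp0 : (0:ℝ) < p := by linarith
  have hfc : Continuous f := by
    rw [continuous_iff_continuousAt]; exact fun t => (hf t).continuousAt
  set w : ℝ → ℝ := fun t => |f t| ^ p with hw_def
  set w' : ℝ → ℝ := fun t => p * |f t| ^ (p - 2) * f t * f' t with hw'_def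
  set G : ℝ → ℝ := fun t => p * (|f t| ^ (p - 1) * |f' t|) with hG_def
  have hw : ∀ t, HasDerivAt w (w' t) t := by
    intro t
    exact (hasDerivAt_abs_rpow (f t) hp).comp t (hf t)
  have habs : ∀ t, |w' t| = G t := by
    intro t
    by_cases h : f t = 0
    · simp [hw'_def, hG_def, h, Real.zero_rpow (by linarith : p - 1 ≠ 0)]
    · have h' : (0:ℝ) < |f t| := abs_pos.mpr h
      simp only [hw'_def, hG_def, abs_mul, abs_abs, abs_of_pos hp0,
        abs_of_nonneg (Real.rpow_nonneg (abs_nonneg (f t)) (p - 2))]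
      rw [show p - 1 = (p - 2) + 1 by ring, Real.rpow_add h', Real.rpow_one]
      ring
  have hGnn : ∀ t, 0 ≤ G t := fun t =>
    mul_nonneg hp0.le (mul_nonneg (Real.rpow_nonneg (abs_nonneg _) _) (abs_nonneg _))
  have hGc : Continuous G :=
    continuous_const.mul ((hfc.abs.rpow_const (fun x => Or.inr (by linarith))).mul hf'c.abs)
  have hGs : HasCompactSupport G := by
    apply h2f.mono'
    intro t ht
    by_contra hmem
    apply ht
    have : f t = 0 := image_eq_zero_of_notMem_tsupport hmem
    simp [hG_def, this, Real.zero_rpow (by linarith : p - 1 ≠ 0)]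
  have hGint : Integrable G := hGc.integrable_of_hasCompactSupport hGs
  have hw'meas : AEStronglyMeasurable w' := by
    have : w' = deriv w := funext fun t => ((hw t).deriv).symm
    rw [this]
    exact aestronglyMeasurable_deriv w _
  have hw'int : Integrable w' :=
    hGint.mono' hw'meas (ae_of_all _ fun t => by rw [Real.norm_eq_abs, habs t])
  obtain ⟨R, hR0, hR⟩ := h2f.exists_pos_le_norm
  set a : ℝ := min (-R) b with ha_def
  have hab : a ≤ b := min_le_right _ _
  have hfa : f a = 0 := by
    apply hR
    have ha : a ≤ -R := min_le_left _ _
    rw [Real.norm_eq_abs, abs_of_nonpos (by linarith)]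
    linarith
  have hwa : w a = 0 := by
    simp [hw_def, hfa, Real.zero_rpow (by linarith : p ≠ 0)]
  have key : ∫ t in a..b, w' t = w b - w a :=
    intervalIntegral.integral_eq_sub_of_hasDerivAt (fun t _ => hw t)
      hw'int.intervalIntegrable
  calc |f b| ^ p = w b := rfl
    _ = ∫ t in a..b, w' t := by rw [key, hwa, sub_zero]
    _ ≤ |∫ t in a..b, w' t| := le_abs_self _
    _ ≤ ∫ t in a..b, |w' t| := by
        simpa [Real.norm_eq_abs] using intervalIntegral.norm_integral_le_integral_norm
          (f := w') (μ := volume) hab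
    _ = ∫ t in a..b, G t := by
        apply intervalIntegral.integral_congr
        intro t _
        exact habs t
    _ = ∫ t in Set.Ioc a b, G t := intervalIntegral.integral_of_le hab
    _ ≤ ∫ t, G t := setIntegral_le_integral hGint (ae_of_all _ hGnn)
    _ = p * ∫ t, |f t| ^ (p - 1) * |f' t| := integral_const_mul p _


theorem stmt_6 (q : ℝ) (hq1 : 1 < q) (hq2 : q < 2)
    (u : ℝ × ℝ → ℝ) (hu : ContDiff ℝ (⊤ : ℕ∞) u) (hsupp : HasCompactSupport u) :
    (2 - q) ^ 2 / (4 * q ^ 2 - (2 - q) ^ 2) *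
        (∫ x, |u x| ^ (4 * q / (2 - q))) ^ ((2 - q) / (2 * q)) ≤
      (∫ x, |fderiv ℝ u x (1, 0)| ^ (2 : ℝ)) ^ ((1 : ℝ) / 2) *
        (∫ x, |fderiv ℝ u x (0, 1)| ^ q) ^ (1 / q) := by
  have hq0 : (0:ℝ) < q := by linarith
  have h2q : (0:ℝ) < 2 - q := by linarith
  have hq1' : (0:ℝ) < q - 1 := by linarith
  set r := 4 * q / (2 - q) with hr_def
  have hr0 : 0 < r := by rw [hr_def]; positivity
  set A := (q + 2) / (2 - q) with hA_def
  set B := (3 * q - 2) / (2 - q) with hB_def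
  have hA1 : 1 < A := by rw [hA_def, lt_div_iff₀ h2q]; linarith
  have hB1 : 1 < B := by rw [hB_def, lt_div_iff₀ h2q]; linarith
  have hAB : A + B = r := by
    rw [hA_def, hB_def, hr_def, ← add_div]
    congr 1; ring
  have hA1r : (A - 1) * 2 = r := by rw [hA_def, hr_def]; field_simp; ring
  have hB1r : (B - 1) * (q / (q - 1)) = r := by rw [hB_def, hr_def]; field_simp; ring
  have huc : Continuous u := hu.continuous
  have hud : Differentiable ℝ u := hu.differentiable (by simp)
  have hfdc : Continuous (fderiv ℝ u) := hu.continuous_fderiv (by simp)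
  have hvol : (volume : Measure (ℝ × ℝ)) = (volume : Measure ℝ).prod volume :=
    Measure.volume_eq_prod ℝ ℝ
  have hg1c : Continuous fun z : ℝ × ℝ => |fderiv ℝ u z (1, 0)| :=
    (hfdc.clm_apply continuous_const).abs
  have hg2c : Continuous fun z : ℝ × ℝ => |fderiv ℝ u z (0, 1)| :=
    (hfdc.clm_apply continuous_const).abs
  have hg1s : HasCompactSupport fun z : ℝ × ℝ => |fderiv ℝ u z (1, 0)| :=
    (hsupp.fderiv ℝ).comp_left (g := fun L : (ℝ × ℝ) →L[ℝ] ℝ => |L (1, 0)|) (by simp)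
  have hg2s : HasCompactSupport fun z : ℝ × ℝ => |fderiv ℝ u z (0, 1)| :=
    (hsupp.fderiv ℝ).comp_left (g := fun L : (ℝ × ℝ) →L[ℝ] ℝ => |L (0, 1)|) (by simp)
  have habs_cont : ∀ e : ℝ, 0 ≤ e → Continuous fun z : ℝ × ℝ => |u z| ^ e :=
    fun e he => huc.abs.rpow_const fun z => Or.inr he
  have habs_supp : ∀ e : ℝ, e ≠ 0 → HasCompactSupport fun z : ℝ × ℝ => |u z| ^ e :=
    fun e he => hsupp.comp_left (g := fun y : ℝ => |y| ^ e) (by simp [Real.zero_rpow he])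
  -- pointwise bounds via 1D FTC
  have hpt1 : ∀ z : ℝ × ℝ, |u z| ^ A ≤
      A * ∫ t, |u (t, z.2)| ^ (A - 1) * |fderiv ℝ u (t, z.2) (1, 0)| := by
    intro z
    have hder : ∀ t : ℝ, HasDerivAt (fun s => u (s, z.2)) (fderiv ℝ u (t, z.2) (1, 0)) t :=
      fun t => (hud (t, z.2)).hasFDerivAt.comp_hasDerivAt t
        ((hasDerivAt_id t).prodMk (hasDerivAt_const t z.2))
    have hiso : Isometry fun s : ℝ => (s, z.2) := fun a b => by
      simp [Prod.edist_eq]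
    have hcsp : HasCompactSupport fun s : ℝ => u (s, z.2) :=
      hsupp.comp_isClosedEmbedding hiso.isClosedEmbedding
    have hctd : Continuous fun t : ℝ => fderiv ℝ u (t, z.2) (1, 0) :=
      (hfdc.comp (continuous_id.prodMk continuous_const)).clm_apply continuous_const
    exact ftc_rpow_bound hA1 hder hctd hcsp z.1
  have hpt2 : ∀ z : ℝ × ℝ, |u z| ^ B ≤
      B * ∫ s, |u (z.1, s)| ^ (B - 1) * |fderiv ℝ u (z.1, s) (0, 1)| := by
    intro z
    have hder : ∀ t : ℝ, HasDerivAt (fun s => u (z.1, s)) (fderiv ℝ u (z.1, t) (0, 1)) t :=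
      fun t => (hud (z.1, t)).hasFDerivAt.comp_hasDerivAt t
        ((hasDerivAt_const t z.1).prodMk (hasDerivAt_id t))
    have hiso : Isometry fun s : ℝ => (z.1, s) := fun a b => by
      simp [Prod.edist_eq]
    have hcsp : HasCompactSupport fun s : ℝ => u (z.1, s) :=
      hsupp.comp_isClosedEmbedding hiso.isClosedEmbedding
    have hctd : Continuous fun t : ℝ => fderiv ℝ u (z.1, t) (0, 1) :=
      (hfdc.comp (continuous_const.prodMk continuous_id)).clm_apply continuous_const
    exact ftc_rpow_bound hB1 hder hctd hcsp z.2
  -- integrability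
  have hF1int : Integrable (fun z : ℝ × ℝ => |u z| ^ (A - 1) * |fderiv ℝ u z (1, 0)|) :=
    ((habs_cont _ (by linarith)).mul hg1c).integrable_of_hasCompactSupport
      ((habs_supp _ (by linarith)).mul_right)
  have hF2int : Integrable (fun z : ℝ × ℝ => |u z| ^ (B - 1) * |fderiv ℝ u z (0, 1)|) :=
    ((habs_cont _ (by linarith)).mul hg2c).integrable_of_hasCompactSupport
      ((habs_supp _ (by linarith)).mul_right)
  have hF1int' : Integrable (fun z : ℝ × ℝ => |u z| ^ (A - 1) * |fderiv ℝ u z (1, 0)|)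
      ((volume : Measure ℝ).prod volume) := hvol ▸ hF1int
  have hF2int' : Integrable (fun z : ℝ × ℝ => |u z| ^ (B - 1) * |fderiv ℝ u z (0, 1)|)
      ((volume : Measure ℝ).prod volume) := hvol ▸ hF2int
  have ha2int : Integrable (fun y : ℝ => ∫ t, |u (t, y)| ^ (A - 1) * |fderiv ℝ u (t, y) (1, 0)|) :=
    hF1int'.integral_prod_right
  have hb1int : Integrable (fun x : ℝ => ∫ s, |u (x, s)| ^ (B - 1) * |fderiv ℝ u (x, s) (0, 1)|) :=
    hF2int'.integral_prod_left
  have hrint : Integrable (fun z : ℝ × ℝ => |u z| ^ r) :=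
    (habs_cont r hr0.le).integrable_of_hasCompactSupport (habs_supp r hr0.ne')
  have ha2nn : ∀ y : ℝ, 0 ≤ ∫ t, |u (t, y)| ^ (A - 1) * |fderiv ℝ u (t, y) (1, 0)| :=
    fun y => integral_nonneg fun t => mul_nonneg (rpow_nonneg (abs_nonneg _) _) (abs_nonneg _)
  have hb1nn : ∀ x : ℝ, 0 ≤ ∫ s, |u (x, s)| ^ (B - 1) * |fderiv ℝ u (x, s) (0, 1)| :=
    fun x => integral_nonneg fun s => mul_nonneg (rpow_nonneg (abs_nonneg _) _) (abs_nonneg _)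
  -- main product step
  have hstep : (∫ z : ℝ × ℝ, |u z| ^ r) ≤
      (A * ∫ z : ℝ × ℝ, |u z| ^ (A - 1) * |fderiv ℝ u z (1, 0)|) *
      (B * ∫ z : ℝ × ℝ, |u z| ^ (B - 1) * |fderiv ℝ u z (0, 1)|) := by
    have hRHSint : Integrable (fun z : ℝ × ℝ =>
        (B * ∫ s, |u (z.1, s)| ^ (B - 1) * |fderiv ℝ u (z.1, s) (0, 1)|) *
        (A * ∫ t, |u (t, z.2)| ^ (A - 1) * |fderiv ℝ u (t, z.2) (1, 0)|)) := by
      rw [hvol]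
      exact (hb1int.const_mul B).mul_prod (ha2int.const_mul A)
    have step1 : (∫ z : ℝ × ℝ, |u z| ^ r) ≤
        ∫ z : ℝ × ℝ,
          (B * ∫ s, |u (z.1, s)| ^ (B - 1) * |fderiv ℝ u (z.1, s) (0, 1)|) *
          (A * ∫ t, |u (t, z.2)| ^ (A - 1) * |fderiv ℝ u (t, z.2) (1, 0)|) := by
      apply integral_mono hrint hRHSint
      intro z
      have hsplit : |u z| ^ r = |u z| ^ A * |u z| ^ B := by
        rw [← hAB]
        exact Real.rpow_add' (abs_nonneg _) (by rw [hAB]; exact hr0.ne')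
      simp only []
      rw [hsplit, mul_comm (|u z| ^ A)]
      exact mul_le_mul (hpt2 z) (hpt1 z) (rpow_nonneg (abs_nonneg _) _)
        (mul_nonneg (by linarith) (hb1nn z.1))
    have step2 : (∫ z : ℝ × ℝ,
          (B * ∫ s, |u (z.1, s)| ^ (B - 1) * |fderiv ℝ u (z.1, s) (0, 1)|) *
          (A * ∫ t, |u (t, z.2)| ^ (A - 1) * |fderiv ℝ u (t, z.2) (1, 0)|)) =
        (A * ∫ z : ℝ × ℝ, |u z| ^ (A - 1) * |fderiv ℝ u z (1, 0)|) *
        (B * ∫ z : ℝ × ℝ, |u z| ^ (B - 1) * |fderiv ℝ u z (0, 1)|) := by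
      have e0 : (∫ z : ℝ × ℝ,
          (B * ∫ s, |u (z.1, s)| ^ (B - 1) * |fderiv ℝ u (z.1, s) (0, 1)|) *
          (A * ∫ t, |u (t, z.2)| ^ (A - 1) * |fderiv ℝ u (t, z.2) (1, 0)|)) =
          (∫ x, B * ∫ s, |u (x, s)| ^ (B - 1) * |fderiv ℝ u (x, s) (0, 1)|) *
          (∫ y, A * ∫ t, |u (t, y)| ^ (A - 1) * |fderiv ℝ u (t, y) (1, 0)|) := by
        rw [hvol]
        exact integral_prod_mul
          (fun x => B * ∫ s, |u (x, s)| ^ (B - 1) * |fderiv ℝ u (x, s) (0, 1)|)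
          (fun y => A * ∫ t, |u (t, y)| ^ (A - 1) * |fderiv ℝ u (t, y) (1, 0)|)
      have e1 : (∫ z : ℝ × ℝ, |u z| ^ (A - 1) * |fderiv ℝ u z (1, 0)|) =
          ∫ y, ∫ t, |u (t, y)| ^ (A - 1) * |fderiv ℝ u (t, y) (1, 0)| := by
        rw [hvol, MeasureTheory.integral_prod _ hF1int']
        exact integral_integral_swap hF1int'
      have e2 : (∫ z : ℝ × ℝ, |u z| ^ (B - 1) * |fderiv ℝ u z (0, 1)|) =
          ∫ x, ∫ s, |u (x, s)| ^ (B - 1) * |fderiv ℝ u (x, s) (0, 1)| := by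
        rw [hvol]
        exact MeasureTheory.integral_prod _ hF2int'
      rw [e0, integral_const_mul, integral_const_mul, e1, e2]
      ring
    exact step1.trans_eq step2
  -- Hölder inequalities
  have hH1 : (∫ z : ℝ × ℝ, |u z| ^ (A - 1) * |fderiv ℝ u z (1, 0)|) ≤
      (∫ z : ℝ × ℝ, |u z| ^ r) ^ ((1:ℝ) / 2) *
      (∫ x : ℝ × ℝ, |fderiv ℝ u x (1, 0)| ^ (2:ℝ)) ^ ((1:ℝ) / 2) := by
    have hconj : Real.HolderConjugate 2 2 := Real.HolderConjugate.two_two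
    have hmem1 : MemLp (fun z : ℝ × ℝ => |u z| ^ (A - 1)) (ENNReal.ofReal 2) :=
      (habs_cont _ (by linarith)).memLp_of_hasCompactSupport (habs_supp _ (by linarith))
    have hmem2 : MemLp (fun z : ℝ × ℝ => |fderiv ℝ u z (1, 0)|) (ENNReal.ofReal 2) :=
      hg1c.memLp_of_hasCompactSupport hg1s
    have hH := integral_mul_le_Lp_mul_Lq_of_nonneg hconj
      (ae_of_all _ fun z => rpow_nonneg (abs_nonneg (u z)) _)
      (ae_of_all _ fun z => abs_nonneg _) hmem1 hmem2
    have hrw : (∫ z : ℝ × ℝ, (|u z| ^ (A - 1)) ^ (2:ℝ)) = ∫ z : ℝ × ℝ, |u z| ^ r := by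
      apply integral_congr_ae
      filter_upwards with z
      rw [← Real.rpow_mul (abs_nonneg _), hA1r]
    rw [hrw] at hH
    exact hH
  have hH2 : (∫ z : ℝ × ℝ, |u z| ^ (B - 1) * |fderiv ℝ u z (0, 1)|) ≤
      (∫ z : ℝ × ℝ, |u z| ^ r) ^ ((q - 1) / q) *
      (∫ x : ℝ × ℝ, |fderiv ℝ u x (0, 1)| ^ q) ^ (1 / q) := by
    have hconj : Real.HolderConjugate (q / (q - 1)) q :=
      (Real.HolderConjugate.conjExponent hq1).symm
    have hmem1 : MemLp (fun z : ℝ × ℝ => |u z| ^ (B - 1)) (ENNReal.ofReal (q / (q - 1))) :=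
      (habs_cont _ (by linarith)).memLp_of_hasCompactSupport (habs_supp _ (by linarith))
    have hmem2 : MemLp (fun z : ℝ × ℝ => |fderiv ℝ u z (0, 1)|) (ENNReal.ofReal q) :=
      hg2c.memLp_of_hasCompactSupport hg2s
    have hH := integral_mul_le_Lp_mul_Lq_of_nonneg hconj
      (ae_of_all _ fun z => rpow_nonneg (abs_nonneg (u z)) _)
      (ae_of_all _ fun z => abs_nonneg _) hmem1 hmem2
    have hrw : (∫ z : ℝ × ℝ, (|u z| ^ (B - 1)) ^ (q / (q - 1))) = ∫ z : ℝ × ℝ, |u z| ^ r := by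
      apply integral_congr_ae
      filter_upwards with z
      rw [← Real.rpow_mul (abs_nonneg _), hB1r]
    rw [hrw, one_div_div] at hH
    exact hH
  -- put everything together
  set I := ∫ z : ℝ × ℝ, |u z| ^ r with hI_def
  set X := (∫ x : ℝ × ℝ, |fderiv ℝ u x (1, 0)| ^ (2:ℝ)) ^ ((1:ℝ) / 2) with hX_def
  set Y := (∫ x : ℝ × ℝ, |fderiv ℝ u x (0, 1)| ^ q) ^ (1 / q) with hY_def
  have hInn : 0 ≤ I := integral_nonneg fun z => rpow_nonneg (abs_nonneg _) _
  have hXnn : 0 ≤ X :=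
    rpow_nonneg (integral_nonneg fun z => rpow_nonneg (abs_nonneg _) _) _
  have hYnn : 0 ≤ Y :=
    rpow_nonneg (integral_nonneg fun z => rpow_nonneg (abs_nonneg _) _) _
  have hchain : I ≤ (A * B) * ((X * Y) * (I ^ ((1:ℝ) / 2) * I ^ ((q - 1) / q))) := by
    calc I ≤ (A * ∫ z : ℝ × ℝ, |u z| ^ (A - 1) * |fderiv ℝ u z (1, 0)|) *
        (B * ∫ z : ℝ × ℝ, |u z| ^ (B - 1) * |fderiv ℝ u z (0, 1)|) := hstep
      _ ≤ (A * (I ^ ((1:ℝ) / 2) * X)) * (B * (I ^ ((q - 1) / q) * Y)) := by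
          apply mul_le_mul
          · exact mul_le_mul_of_nonneg_left hH1 (by linarith)
          · exact mul_le_mul_of_nonneg_left hH2 (by linarith)
          · exact mul_nonneg (by linarith)
              (integral_nonneg fun z => mul_nonneg (rpow_nonneg (abs_nonneg _) _) (abs_nonneg _))
          · exact mul_nonneg (by linarith)
              (mul_nonneg (rpow_nonneg hInn _) hXnn)
      _ = (A * B) * ((X * Y) * (I ^ ((1:ℝ) / 2) * I ^ ((q - 1) / q))) := by ring
  rcases hInn.eq_or_lt with hI0 | hIpos
  · rw [← hI0, Real.zero_rpow (by positivity : ((2:ℝ) - q) / (2 * q) ≠ 0), mul_zero]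
    exact mul_nonneg hXnn hYnn
  · have hIsum : (1:ℝ) / 2 + (q - 1) / q + (2 - q) / (2 * q) = 1 := by
      field_simp
      ring
    have hIsplit : I = I ^ ((1:ℝ) / 2 + (q - 1) / q) * I ^ ((2 - q) / (2 * q)) := by
      rw [← Real.rpow_add hIpos, hIsum, Real.rpow_one]
    have hIs : I ^ ((1:ℝ) / 2) * I ^ ((q - 1) / q) = I ^ ((1:ℝ) / 2 + (q - 1) / q) :=
      (Real.rpow_add hIpos _ _).symm
    have hkey : I ^ ((2 - q) / (2 * q)) ≤ (A * B) * (X * Y) := by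
      have h1 : I ^ ((2 - q) / (2 * q)) * I ^ ((1:ℝ) / 2 + (q - 1) / q) ≤
          ((A * B) * (X * Y)) * I ^ ((1:ℝ) / 2 + (q - 1) / q) := by
        calc I ^ ((2 - q) / (2 * q)) * I ^ ((1:ℝ) / 2 + (q - 1) / q) = I := by
              rw [mul_comm]; exact hIsplit.symm
          _ ≤ (A * B) * ((X * Y) * (I ^ ((1:ℝ) / 2) * I ^ ((q - 1) / q))) := hchain
          _ = ((A * B) * (X * Y)) * (I ^ ((1:ℝ) / 2) * I ^ ((q - 1) / q)) := by ring
          _ = ((A * B) * (X * Y)) * I ^ ((1:ℝ) / 2 + (q - 1) / q) := by rw [hIs]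
      exact le_of_mul_le_mul_right h1 (Real.rpow_pos_of_pos hIpos _)
    have hden : (0:ℝ) < 4 * q ^ 2 - (2 - q) ^ 2 := by nlinarith
    have hTAB : (2 - q) ^ 2 / (4 * q ^ 2 - (2 - q) ^ 2) * (A * B) = 1 := by
      rw [hA_def, hB_def, div_mul_div_comm, div_mul_div_comm,
        div_eq_one_iff_eq (mul_pos hden (mul_pos h2q h2q)).ne']
      ring
    calc (2 - q) ^ 2 / (4 * q ^ 2 - (2 - q) ^ 2) * I ^ ((2 - q) / (2 * q))
        ≤ (2 - q) ^ 2 / (4 * q ^ 2 - (2 - q) ^ 2) * ((A * B) * (X * Y)) :=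
          mul_le_mul_of_nonneg_left hkey (by positivity)
      _ = X * Y := by rw [← mul_assoc, hTAB, one_mul]
end
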